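/- Let P : W → W be the orthogonal projection onto the orthogonal complement of range(Jz), and let Q : Y → Y be the orthogonal projection onto K. Then: (i) the linear map Y → W × Y given by y ↦ (P(Jy y), Q y) is injective; and (ii) for all x ∈ X and y ∈ Y, the element y is the unique solution of the system in statement 'there exists z with Jx x + Jy y + Jz z = 0 and y ∈ Kᗮ' if and only if P(Jy y) = −P(Jx x) and Q y = 0. (Coordinate-free form of Proposition 3.1: the matrix A = [Qᵀ Jy; Uyᵀ] has linearly independent columns and the derivative of the solution map solves A·DH = [−Qᵀ Jx; 0].) -/

import Mathlib

/-!
Both parts reduce to two kernel computations. Eliminating `z` shows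
`K = Jy⁻¹(range Jz)`, and `ker P = (range Jz)ᗮᗮ = range Jz`. Hence the kernel of
`y ↦ (P (Jy y), Q y)` is `K ⊓ Kᗮ = ⊥`, and `Jx x + Jy y + Jz z = 0` is solvable in `z`
exactly when `Jx x + Jy y ∈ range Jz = ker P`.
-/

open LinearMap Submodule

namespace LinearMap

variable {R M N P : Type*} [Ring R] [AddCommGroup M] [AddCommGroup N] [AddCommGroup P]
  [Module R M] [Module R N] [Module R P]

theorem exists_add_apply_eq_zero_iff_mem_range (g : N →ₗ[R] P) (w : P) :
    (∃ z, w + g z = 0) ↔ w ∈ range g := by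
  refine ⟨fun ⟨z, hz⟩ ↦ ⟨-z, ?_⟩, fun ⟨z, hz⟩ ↦ ⟨-z, ?_⟩⟩
  · rw [map_neg, eq_neg_of_add_eq_zero_left hz]
  · rw [map_neg, hz, add_neg_cancel]

theorem map_fst_ker_coprod (f : M →ₗ[R] P) (g : N →ₗ[R] P) :
    (ker (f.coprod g)).map (fst R M N) = (range g).comap f := by
  ext y
  rw [mem_comap, ← exists_add_apply_eq_zero_iff_mem_range]
  constructor
  · rintro ⟨⟨y, z⟩, hyz, rfl⟩
    exact ⟨z, hyz⟩
  · rintro ⟨z, hz⟩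
    exact ⟨(y, z), hz, rfl⟩

end LinearMap

theorem LinearMap.ker_eq_orthogonal_of_apply_eq_orthogonalProjectionOnto
    {𝕜 E : Type*} [RCLike 𝕜] [NormedAddCommGroup E] [InnerProductSpace 𝕜 E]
    {U : Submodule 𝕜 E} [U.HasOrthogonalProjection] {P : E →ₗ[𝕜] E}
    (hP : ∀ v, P v = U.orthogonalProjectionOnto v) : ker P = Uᗮ := by
  ext v
  rw [mem_ker, hP, ZeroMemClass.coe_eq_zero, orthogonalProjectionOnto_eq_zero_iff]

theorem stmt8_general {X Y Z W : Type*}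
    [NormedAddCommGroup X] [InnerProductSpace ℝ X]
    [NormedAddCommGroup Y] [InnerProductSpace ℝ Y] [FiniteDimensional ℝ Y]
    [NormedAddCommGroup Z] [InnerProductSpace ℝ Z]
    [NormedAddCommGroup W] [InnerProductSpace ℝ W] [FiniteDimensional ℝ W]
    (Jx : X →ₗ[ℝ] W) (Jy : Y →ₗ[ℝ] W) (Jz : Z →ₗ[ℝ] W)
    (K : Submodule ℝ Y)
    (hK : K = (LinearMap.ker (Jy.coprod Jz)).map (LinearMap.fst ℝ Y Z))
    (P : W →ₗ[ℝ] W)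
    (hP : ∀ w : W, P w = (Submodule.orthogonalProjectionOnto ((LinearMap.range Jz)ᗮ) w : W))
    (Q : Y →ₗ[ℝ] Y)
    (hQ : ∀ y : Y, Q y = (Submodule.orthogonalProjectionOnto K y : Y)) :
    Function.Injective (fun y : Y => (P (Jy y), Q y)) ∧
    ∀ (x : X) (y : Y),
      ((∃ z : Z, Jx x + Jy y + Jz z = 0) ∧ y ∈ Kᗮ) ↔
        (P (Jy y) = -P (Jx x) ∧ Q y = 0) := by
  rw [map_fst_ker_coprod] at hK
  have hkerP : ker P = range Jz := by
    rw [ker_eq_orthogonal_of_apply_eq_orthogonalProjectionOnto hP, orthogonal_orthogonal]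
  have hkerQ : ker Q = Kᗮ := ker_eq_orthogonal_of_apply_eq_orthogonalProjectionOnto hQ
  refine ⟨?_, fun x y ↦ ?_⟩
  · change Function.Injective ((P ∘ₗ Jy).prod Q)
    rw [← ker_eq_bot, ker_prod, ker_comp, hkerP, hkerQ, ← hK, inf_orthogonal_eq_bot]
  · rw [← mem_ker (f := Q), hkerQ, exists_add_apply_eq_zero_iff_mem_range, ← hkerP, mem_ker,
      map_add, add_eq_zero_iff_eq_neg']

/-- Coordinate-free form of Proposition 3.1: with `P` the orthogonal projection
onto `(range Jz)ᗮ` and `Q` the orthogonal projection onto `K`, the map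
`y ↦ (P (Jy y), Q y)` is injective, and `y` solves the system
`∃ z, Jx x + Jy y + Jz z = 0 ∧ y ∈ Kᗮ` iff `P (Jy y) = -P (Jx x)` and
`Q y = 0`. -/
theorem stmt8 {X Y Z W : Type*}
    [NormedAddCommGroup X] [InnerProductSpace ℝ X] [FiniteDimensional ℝ X]
    [NormedAddCommGroup Y] [InnerProductSpace ℝ Y] [FiniteDimensional ℝ Y]
    [NormedAddCommGroup Z] [InnerProductSpace ℝ Z] [FiniteDimensional ℝ Z]
    [NormedAddCommGroup W] [InnerProductSpace ℝ W] [FiniteDimensional ℝ W]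
    (Jx : X →ₗ[ℝ] W) (Jy : Y →ₗ[ℝ] W) (Jz : Z →ₗ[ℝ] W)
    (hfeas : LinearMap.range Jx ≤ LinearMap.range Jy ⊔ LinearMap.range Jz)
    (K : Submodule ℝ Y)
    (hK : K = (LinearMap.ker (Jy.coprod Jz)).map (LinearMap.fst ℝ Y Z))
    (P : W →ₗ[ℝ] W)
    (hP : ∀ w : W, P w = (Submodule.orthogonalProjectionOnto ((LinearMap.range Jz)ᗮ) w : W))
    (Q : Y →ₗ[ℝ] Y)
    (hQ : ∀ y : Y, Q y = (Submodule.orthogonalProjectionOnto K y : Y)) :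
    Function.Injective (fun y : Y => (P (Jy y), Q y)) ∧
    ∀ (x : X) (y : Y),
      ((∃ z : Z, Jx x + Jy y + Jz z = 0) ∧ y ∈ Kᗮ) ↔
        (P (Jy y) = -P (Jx x) ∧ Q y = 0) :=
  stmt8_general Jx Jy Jz K hK P hP Q hQ
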